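/- arXiv:math/0504451 — 3 statements merged into one kernel-verified Lean document; each statement's English description precedes it below -/
import Mathlib

section
/- For every even integer k ≥ 2 and every real x, the improper oscillatory integral A_k(x) = lim_{ε→0+} ∫_{-∞}^{∞} exp(-ε s^k + i x s + i s^k) ds exists and satisfies |A_k(x)| ≤ 6. -/
/-!
Write the integrand as `e^{-ε s^k} e^{i φ(s)}` with `φ(s) = x s + s^k`. Since `k - 1` is odd,
`φ'` is increasing with a single zero `s₀`, and `(t + 2)^(k-1) - t^(k-1) ≥ 2` gives `|φ'| ≥ 4`
off `(s₀ - 2, s₀ + 2)`. Van der Corput's lemma, combined with the monotonicity of the damping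
factor on each half-line, bounds `∫ₐᵇ` by `4 / min |φ'|` uniformly in `ε ≥ 0`. This gives the
bound `1 + 4 + 1` on `[-R, R]` and tails of size `O(1/R)` uniformly in `ε`. So the truncated
integrals converge uniformly in `ε` (to the integral over `ℝ` when `ε > 0`), are continuous in `ε`
and are Cauchy at `ε = 0`, and the Moore–Osgood theorem exchanges the two limits.
-/

open MeasureTheory Filter Set Topology

open Complex in
theorem norm_integral_ofReal_mul_deriv_le_of_deriv_nonpos {u u' : ℝ → ℝ} {v v' : ℝ → ℂ}
    {a b C : ℝ} (hab : a ≤ b) (hu : ∀ s ∈ Icc a b, HasDerivAt u (u' s) s)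
    (hv : ∀ s ∈ Icc a b, HasDerivAt v (v' s) s) (hu'_int : IntervalIntegrable u' volume a b)
    (hv'_int : IntervalIntegrable v' volume a b) (hu' : ∀ s ∈ Icc a b, u' s ≤ 0)
    (hC : ∀ s ∈ Icc a b, ‖v s‖ ≤ C) :
    ‖∫ s in a..b, (u s : ℂ) * v' s‖ ≤ |u a| * ‖v a‖ + |u b| * ‖v b‖ + C * (u a - u b) := by
  rw [← uIcc_of_le hab] at hu hv
  rw [intervalIntegral.integral_mul_deriv_eq_deriv_mul (fun s hs => (hu s hs).ofReal_comp) hv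
    ⟨hu'_int.1.ofReal, hu'_int.2.ofReal⟩ hv'_int]
  have hrest : ‖∫ s in a..b, (u' s : ℂ) * v s‖ ≤ ∫ s in a..b, -u' s * C := by
    refine intervalIntegral.norm_integral_le_of_norm_le hab (ae_of_all _ fun s hs => ?_)
      (hu'_int.neg.mul_const C)
    have hs : s ∈ Icc a b := Ioc_subset_Icc_self hs
    rw [norm_mul, norm_real, Real.norm_of_nonpos (hu' s hs)]
    exact mul_le_mul_of_nonneg_left (hC s hs) (neg_nonneg.2 (hu' s hs))
  have hftc : ∫ s in a..b, -u' s * C = C * (u a - u b) := by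
    rw [intervalIntegral.integral_mul_const, intervalIntegral.integral_neg,
      intervalIntegral.integral_eq_sub_of_hasDerivAt hu hu'_int]
    ring
  calc ‖(u b : ℂ) * v b - u a * v a - ∫ s in a..b, (u' s : ℂ) * v s‖
      ≤ ‖(u a : ℂ) * v a‖ + ‖(u b : ℂ) * v b‖ + ‖∫ s in a..b, (u' s : ℂ) * v s‖ := by
        have := norm_sub_le ((u b : ℂ) * v b - u a * v a) (∫ s in a..b, (u' s : ℂ) * v s)
        have := norm_sub_le ((u b : ℂ) * v b) (u a * v a)
        linarith
    _ ≤ |u a| * ‖v a‖ + |u b| * ‖v b‖ + C * (u a - u b) := by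
        simp only [norm_mul, norm_real, Real.norm_eq_abs]
        linarith

open Complex in
/-- Van der Corput's first-derivative estimate, for a convex phase. -/
theorem norm_integral_exp_mul_I_le {φ φ' φ'' : ℝ → ℝ} {a b m : ℝ} (hab : a ≤ b) (hm : 0 < m)
    (hφ : ∀ s ∈ Icc a b, HasDerivAt φ (φ' s) s) (hφ' : ∀ s ∈ Icc a b, HasDerivAt φ' (φ'' s) s)
    (hφ''c : ContinuousOn φ'' (Icc a b)) (hφ'' : ∀ s ∈ Icc a b, 0 ≤ φ'' s)
    (hmφ' : ∀ s ∈ Icc a b, m ≤ |φ' s|) :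
    ‖∫ s in a..b, exp (φ s * I)‖ ≤ 2 / m := by
  have hne : ∀ s ∈ Icc a b, φ' s ≠ 0 := fun s hs h => by
    have := hmφ' s hs
    rw [h, abs_zero] at this
    linarith
  have hφc : ContinuousOn φ (Icc a b) := fun s hs => (hφ s hs).continuousAt.continuousWithinAt
  have hφ'c : ContinuousOn φ' (Icc a b) := fun s hs => (hφ' s hs).continuousAt.continuousWithinAt
  have hunit : ∀ s, ‖-I * exp (φ s * I)‖ = 1 := fun s => by simp [norm_exp]
  -- integrate by parts against `1 / φ'`, which is antitone because `φ'' ≥ 0`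
  have key := norm_integral_ofReal_mul_deriv_le_of_deriv_nonpos (u := fun s => (φ' s)⁻¹)
    (u' := fun s => -φ'' s / φ' s ^ 2) (v := fun s => -I * exp (φ s * I))
    (v' := fun s => φ' s * exp (φ s * I)) (C := 1) hab
    (fun s hs => (hφ' s hs).inv (hne s hs))
    (fun s hs => by
      refine (((hφ s hs).ofReal_comp.mul_const I).cexp.const_mul (-I)).congr_deriv ?_
      linear_combination (-(exp (φ s * I)) * φ' s) * I_mul_I)
    ((hφ''c.neg.div (hφ'c.pow 2) fun s hs => pow_ne_zero 2 (hne s hs)).intervalIntegrable_of_Icc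
      hab)
    ((by fun_prop : ContinuousOn (fun s => (φ' s : ℂ) * exp (φ s * I)) (Icc a b))
      |>.intervalIntegrable_of_Icc hab)
    (fun s hs => div_nonpos_of_nonpos_of_nonneg (neg_nonpos.2 (hφ'' s hs)) (sq_nonneg _))
    (fun s _ => (hunit s).le)
  have hmono : φ' a ≤ φ' b := by
    have hftc := intervalIntegral.integral_eq_sub_of_hasDerivAt
      (fun s hs => hφ' s (by rwa [uIcc_of_le hab] at hs)) (hφ''c.intervalIntegrable_of_Icc hab)
    have := intervalIntegral.integral_nonneg (μ := volume) hab hφ''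
    linarith
  have ha : a ∈ Icc a b := left_mem_Icc.2 hab
  have hb : b ∈ Icc a b := right_mem_Icc.2 hab
  have hinv : ∀ s ∈ Icc a b, |(φ' s)⁻¹| ≤ m⁻¹ := fun s hs => by
    rw [abs_inv]
    exact inv_anti₀ hm (hmφ' s hs)
  rw [intervalIntegral.integral_congr (g := fun s => ((φ' s)⁻¹ : ℝ) * (φ' s * exp (φ s * I)))
    fun s hs => ?_]
  · refine key.trans ?_
    rw [hunit, hunit, mul_one, mul_one, one_mul, div_eq_mul_inv]
    -- if `φ' a < 0` the two terms in `(φ' a)⁻¹` cancel; otherwise `0 < φ' a ≤ φ' b`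
    rcases (hne a ha).lt_or_gt with hneg | hpos
    · rw [abs_of_neg (inv_lt_zero.2 hneg)]
      linarith [neg_abs_le (φ' b)⁻¹, hinv b hb]
    · have hq : 0 < (φ' b)⁻¹ := inv_pos.2 (hpos.trans_le hmono)
      rw [abs_of_pos (inv_pos.2 hpos), abs_of_pos hq]
      linarith [hinv a ha, le_abs_self (φ' a)⁻¹]
  · rw [uIcc_of_le hab] at hs
    push_cast
    field_simp [ofReal_ne_zero.2 (hne s hs)]

/-- The second mean value theorem, in the form given by integration by parts. -/
theorem norm_integral_ofReal_mul_le_of_deriv_nonpos {h h' : ℝ → ℝ} {g : ℝ → ℂ} {a b C : ℝ}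
    (hab : a ≤ b) (hh : ∀ s ∈ Icc a b, HasDerivAt h (h' s) s)
    (hh'_int : IntervalIntegrable h' volume a b) (hh' : ∀ s ∈ Icc a b, h' s ≤ 0) (hhb : 0 ≤ h b)
    (hg : Continuous g) (hC : ∀ t ∈ Icc a b, ‖∫ s in a..t, g s‖ ≤ C) :
    ‖∫ s in a..b, (h s : ℂ) * g s‖ ≤ C * h a := by
  have key := norm_integral_ofReal_mul_deriv_le_of_deriv_nonpos hab hh
    (fun t _ => (hg.integral_hasStrictDerivAt a t).hasDerivAt) hh'_int
    (hg.intervalIntegrable a b) hh' hC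
  rw [intervalIntegral.integral_same, norm_zero, mul_zero, zero_add, abs_of_nonneg hhb] at key
  nlinarith [hC b (right_mem_Icc.2 hab)]

theorem two_le_add_two_pow_sub_pow {p : ℕ} (hp : Odd p) (t : ℝ) : 2 ≤ (t + 2) ^ p - t ^ p := by
  have hp0 : p ≠ 0 := hp.pos.ne'
  -- `t ↦ (t + 2) ^ p - t ^ p` is symmetric about `t = -1`, where it equals `2`
  have key : ∀ t : ℝ, -1 ≤ t → 2 ≤ (t + 2) ^ p - t ^ p := by
    intro t ht
    rcases le_total 0 t with h0 | h0
    · have := pow_add_pow_le h0 zero_le_two hp0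
      have : (2 : ℝ) ≤ 2 ^ p := le_self_pow₀ one_le_two hp0
      linarith
    · have h1 := one_add_mul_le_pow (a := t + 1) (by linarith) p
      have h2 := one_add_mul_le_pow (a := -(t + 1)) (by linarith) p
      rw [show 1 + (t + 1) = t + 2 by ring] at h1
      rw [show 1 + -(t + 1) = -t by ring, hp.neg_pow] at h2
      linarith
  rcases le_total (-1) t with ht | ht
  · exact key t ht
  · have := key (-t - 2) (by linarith)
    rw [show -t - 2 + 2 = -t by ring, show -t - 2 = -(t + 2) by ring, hp.neg_pow,
      hp.neg_pow] at this
    linarith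

namespace OscillatoryIntegral

noncomputable def integrand (k : ℕ) (x ε s : ℝ) : ℂ :=
  Complex.exp (-(↑(ε * s ^ k)) + ↑(x * s) * Complex.I + ↑(s ^ k) * Complex.I)

def phase (k : ℕ) (x s : ℝ) : ℝ := x * s + s ^ k

def phaseDeriv (k : ℕ) (x s : ℝ) : ℝ := x + k * s ^ (k - 1)

noncomputable def damping (k : ℕ) (ε s : ℝ) : ℝ := Real.exp (-(ε * s ^ k))

variable {k : ℕ} {x ε s : ℝ}

theorem integrand_eq :
    integrand k x ε s = damping k ε s * Complex.exp (phase k x s * Complex.I) := by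
  rw [integrand, damping, phase, Complex.ofReal_exp, ← Complex.exp_add]
  push_cast
  ring_nf

theorem integrand_neg (hke : Even k) : integrand k x ε (-s) = integrand k (-x) ε s := by
  simp only [integrand, hke.neg_pow, mul_neg, neg_mul]

theorem norm_integrand : ‖integrand k x ε s‖ = damping k ε s := by
  rw [integrand_eq, norm_mul, Complex.norm_exp_ofReal_mul_I, mul_one, Complex.norm_real]
  exact Real.norm_of_nonneg (Real.exp_pos _).le

theorem damping_le_one (hke : Even k) (hε : 0 ≤ ε) : damping k ε s ≤ 1 := by
  rw [damping, Real.exp_le_one_iff, neg_nonpos]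
  exact mul_nonneg hε (hke.pow_nonneg s)

theorem continuous_integrand : Continuous (integrand k x ε) := by
  unfold integrand
  fun_prop

theorem continuous_integrand_uncurry : Continuous (Function.uncurry (integrand k x)) := by
  unfold integrand Function.uncurry
  fun_prop

theorem integrable_integrand (hk : 2 ≤ k) (hke : Even k) (hε : 0 < ε) :
    Integrable (integrand k x ε) := by
  refine ((integrable_exp_neg_mul_sq hε).const_mul (Real.exp ε)).mono'
    continuous_integrand.aestronglyMeasurable (ae_of_all _ fun s => ?_)
  obtain ⟨j, rfl⟩ := hke
  have hsq : s ^ 2 ≤ s ^ (j + j) + 1 := by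
    rw [← two_mul, pow_mul]
    rcases le_total (s ^ 2) 1 with h | h
    · linarith [pow_nonneg (sq_nonneg s) j]
    · linarith [le_self_pow₀ h (show j ≠ 0 by omega)]
  rw [norm_integrand, damping, ← Real.exp_add, Real.exp_le_exp]
  nlinarith

theorem hasDerivAt_phase (k : ℕ) (x s : ℝ) : HasDerivAt (phase k x) (phaseDeriv k x s) s :=
  (((hasDerivAt_id s).const_mul x).fun_add (hasDerivAt_pow k s)).congr_deriv
    (by simp [phaseDeriv])

theorem hasDerivAt_phaseDeriv (k : ℕ) (x s : ℝ) :
    HasDerivAt (phaseDeriv k x) (k * ((k - 1 : ℕ) * s ^ (k - 1 - 1))) s :=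
  ((hasDerivAt_pow (k - 1) s).const_mul (k : ℝ)).const_add x

theorem hasDerivAt_damping (k : ℕ) (ε s : ℝ) :
    HasDerivAt (damping k ε) (damping k ε s * -(ε * (k * s ^ (k - 1)))) s :=
  (((hasDerivAt_pow k s).const_mul ε).neg).exp

section PhaseDeriv

variable (hk : 2 ≤ k) (hke : Even k)
include hk hke

theorem phaseDeriv_neg : phaseDeriv k x (-s) = -phaseDeriv k (-x) s := by
  rw [phaseDeriv, phaseDeriv, (Nat.Even.sub_odd (by omega) hke odd_one).neg_pow]
  ring

theorem monotone_phaseDeriv : Monotone (phaseDeriv k x) := fun _ _ hst => by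
  unfold phaseDeriv
  gcongr x + k * ?_
  exact (Nat.Even.sub_odd (by omega) hke odd_one).strictMono_pow.monotone hst

omit hke in
theorem add_le_phaseDeriv (hs : 1 ≤ s) : x + s ≤ phaseDeriv k x s := by
  have h1 : s ≤ s ^ (k - 1) := le_self_pow₀ hs (by omega)
  have h2 : (1 : ℝ) ≤ k := by exact_mod_cast (by omega : 1 ≤ k)
  rw [phaseDeriv]
  nlinarith

theorem sub_abs_le_abs_phaseDeriv (hs : 1 ≤ |s|) : |s| - |x| ≤ |phaseDeriv k x s| := by
  rcases le_total 0 s with h | h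
  · rw [abs_of_nonneg h] at hs ⊢
    linarith [add_le_phaseDeriv (x := x) hk hs, le_abs_self (phaseDeriv k x s), neg_abs_le x]
  · rw [abs_of_nonpos h] at hs ⊢
    have := add_le_phaseDeriv (x := -x) hk hs
    rw [← neg_neg s, phaseDeriv_neg hk hke, abs_neg, neg_neg]
    linarith [le_abs_self (phaseDeriv k (-x) (-s)), le_abs_self x]

theorem exists_phaseDeriv_eq_zero (x : ℝ) : ∃ s₀, phaseDeriv k x s₀ = 0 := by
  have hr : 1 ≤ |x| + 1 := by linarith [abs_nonneg x]
  have hpos := add_le_phaseDeriv (x := x) hk hr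
  have hneg := add_le_phaseDeriv (x := -x) hk hr
  have hreflect := phaseDeriv_neg (x := x) (s := |x| + 1) hk hke
  obtain ⟨s₀, -, hs₀⟩ := intermediate_value_Icc (show -(|x| + 1) ≤ |x| + 1 by linarith)
    (by unfold phaseDeriv; fun_prop : Continuous (phaseDeriv k x)).continuousOn
    (show (0 : ℝ) ∈ Icc _ _ by constructor <;> linarith [le_abs_self x, neg_abs_le x])
  exact ⟨s₀, hs₀⟩

theorem four_le_abs_phaseDeriv {s₀ : ℝ} (hs₀ : phaseDeriv k x s₀ = 0)
    (hs : s ≤ s₀ - 2 ∨ s₀ + 2 ≤ s) : 4 ≤ |phaseDeriv k x s| := by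
  have hodd : Odd (k - 1) := Nat.Even.sub_odd (by omega) hke odd_one
  have hk2 : (2 : ℝ) ≤ k := by exact_mod_cast hk
  rcases hs with hs | hs
  · have hmono := monotone_phaseDeriv (x := x) hk hke hs
    have hgap := mul_le_mul_of_nonneg_left (two_le_add_two_pow_sub_pow hodd (s₀ - 2))
      k.cast_nonneg
    simp only [phaseDeriv, sub_add_cancel] at hs₀ hmono hgap ⊢
    rw [abs_of_neg (by linarith)]
    linarith
  · have hmono := monotone_phaseDeriv (x := x) hk hke hs
    have hgap := mul_le_mul_of_nonneg_left (two_le_add_two_pow_sub_pow hodd s₀) k.cast_nonneg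
    simp only [phaseDeriv] at hs₀ hmono hgap ⊢
    rw [abs_of_pos (by linarith)]
    linarith

end PhaseDeriv

section Estimates

variable (hk : 2 ≤ k) (hke : Even k)
include hk hke

theorem norm_integral_integrand_le_of_nonneg {a b m : ℝ} (ha : 0 ≤ a) (hab : a ≤ b)
    (hm : 0 < m) (hmφ : ∀ s ∈ Icc a b, m ≤ |phaseDeriv k x s|) (hε : 0 ≤ ε) :
    ‖∫ s in a..b, integrand k x ε s‖ ≤ 2 / m := by
  have hconvex : Even (k - 1 - 1) := by
    rw [show k - 1 - 1 = k - 2 by omega]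
    exact (Nat.even_sub hk).2 (iff_of_true hke even_two)
  simp_rw [integrand_eq]
  -- the damping factor decreases on `[0, ∞)`, so it costs nothing against van der Corput's bound
  calc _ ≤ 2 / m * damping k ε a := norm_integral_ofReal_mul_le_of_deriv_nonpos hab
          (fun s _ => hasDerivAt_damping k ε s)
          ((by unfold damping; fun_prop : Continuous fun s =>
            damping k ε s * -(ε * (k * s ^ (k - 1)))).intervalIntegrable a b)
          (fun s hs => mul_nonpos_of_nonneg_of_nonpos (Real.exp_pos _).le
            (neg_nonpos.2 (mul_nonneg hε (mul_nonneg k.cast_nonneg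
              (pow_nonneg (ha.trans hs.1) _)))))
          (Real.exp_pos _).le
          (by unfold phase; fun_prop)
          (fun t ht => norm_integral_exp_mul_I_le ht.1 hm (fun s _ => hasDerivAt_phase k x s)
            (fun s _ => hasDerivAt_phaseDeriv k x s) (by fun_prop)
            (fun s _ => by have := hconvex.pow_nonneg s; positivity)
            (fun s hs => hmφ s ⟨hs.1, hs.2.trans ht.2⟩))
    _ ≤ 2 / m := mul_le_of_le_one_right (by positivity) (damping_le_one hke hε)

omit hk in
theorem integral_integrand_neg (a b : ℝ) :
    ∫ s in a..b, integrand k x ε s = ∫ s in -b..-a, integrand k (-x) ε s := by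
  rw [← intervalIntegral.integral_comp_neg]
  simp_rw [integrand_neg hke, neg_neg]

theorem norm_integral_integrand_le_of_nonpos {a b m : ℝ} (hb : b ≤ 0) (hab : a ≤ b)
    (hm : 0 < m) (hmφ : ∀ s ∈ Icc a b, m ≤ |phaseDeriv k x s|) (hε : 0 ≤ ε) :
    ‖∫ s in a..b, integrand k x ε s‖ ≤ 2 / m := by
  rw [integral_integrand_neg hke]
  refine norm_integral_integrand_le_of_nonneg hk hke (neg_nonneg.2 hb) (neg_le_neg hab) hm
    (fun s hs => ?_) hε
  have := hmφ (-s) ⟨le_neg.1 hs.2, neg_le.1 hs.1⟩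
  rwa [phaseDeriv_neg hk hke, abs_neg] at this

theorem norm_integral_integrand_le {a b m : ℝ} (hab : a ≤ b) (hm : 0 < m)
    (hmφ : ∀ s ∈ Icc a b, m ≤ |phaseDeriv k x s|) (hε : 0 ≤ ε) :
    ‖∫ s in a..b, integrand k x ε s‖ ≤ 4 / m := by
  have h24 : 2 / m ≤ 4 / m := div_le_div_of_nonneg_right (by norm_num) hm.le
  rcases le_total 0 a with ha | ha
  · exact (norm_integral_integrand_le_of_nonneg hk hke ha hab hm hmφ hε).trans h24
  rcases le_total b 0 with hb | hb
  · exact (norm_integral_integrand_le_of_nonpos hk hke hb hab hm hmφ hε).trans h24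
  rw [← intervalIntegral.integral_add_adjacent_intervals (b := 0)
    (continuous_integrand.intervalIntegrable _ _) (continuous_integrand.intervalIntegrable _ _)]
  have hleft := norm_integral_integrand_le_of_nonpos hk hke le_rfl ha hm
    (fun s hs => hmφ s ⟨hs.1, hs.2.trans hb⟩) hε
  have hright := norm_integral_integrand_le_of_nonneg hk hke le_rfl hb hm
    (fun s hs => hmφ s ⟨ha.trans hs.1, hs.2⟩) hε
  calc _ ≤ _ := norm_add_le _ _
    _ ≤ 2 / m + 2 / m := add_le_add hleft hright
    _ = 4 / m := by ring

/-- Off the window `[s₀ - 2, s₀ + 2]` around the stationary point, `|φ'| ≥ 4` and each tail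
contributes at most `1`; the window contributes at most its length `4`. -/
theorem eventually_norm_integral_integrand_le_six (hε : 0 ≤ ε) :
    ∀ᶠ R in atTop, ‖∫ s in -R..R, integrand k x ε s‖ ≤ 6 := by
  obtain ⟨s₀, hs₀⟩ := exists_phaseDeriv_eq_zero hk hke x
  filter_upwards [eventually_ge_atTop (|s₀| + 2)] with R hR
  have hint : ∀ a b, IntervalIntegrable (integrand k x ε) volume a b :=
    fun a b => continuous_integrand.intervalIntegrable a b
  rw [← intervalIntegral.integral_add_adjacent_intervals (hint (-R) (s₀ - 2)) (hint _ R),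
    ← intervalIntegral.integral_add_adjacent_intervals (hint (s₀ - 2) (s₀ + 2)) (hint _ R)]
  have hleft := norm_integral_integrand_le hk hke (a := -R) (b := s₀ - 2)
    (by linarith [neg_abs_le s₀]) four_pos
    (fun s hs => four_le_abs_phaseDeriv hk hke hs₀ (Or.inl hs.2)) hε
  have hright := norm_integral_integrand_le hk hke (a := s₀ + 2) (b := R)
    (by linarith [le_abs_self s₀]) four_pos
    (fun s hs => four_le_abs_phaseDeriv hk hke hs₀ (Or.inr hs.1)) hε
  have hmid := intervalIntegral.norm_integral_le_of_norm_le_const (a := s₀ - 2) (b := s₀ + 2)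
    fun s _ => (norm_integrand (x := x)).trans_le (damping_le_one (s := s) hke hε)
  rw [show s₀ + 2 - (s₀ - 2) = 4 by ring, abs_of_pos four_pos] at hmid
  calc _ ≤ _ := norm_add_le _ _
    _ ≤ 4 / 4 + (1 * 4 + 4 / 4) := by gcongr; exact (norm_add_le _ _).trans (by gcongr)
    _ = 6 := by norm_num

end Estimates

/-- Beyond the radius `|x| + n + 1` one has `|φ'| ≥ n + 1`, by `sub_abs_le_abs_phaseDeriv`. -/
noncomputable def truncIntegral (k : ℕ) (x : ℝ) (n : ℕ) (ε : ℝ) : ℂ :=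
  ∫ s in -(|x| + n + 1)..(|x| + n + 1), integrand k x ε s

theorem tendsto_radius_atTop (x : ℝ) : Tendsto (fun n : ℕ => |x| + n + 1) atTop atTop :=
  tendsto_atTop_add_const_right _ 1 (tendsto_atTop_add_const_left _ |x| tendsto_natCast_atTop_atTop)

theorem continuous_truncIntegral (n : ℕ) : Continuous (truncIntegral k x n) :=
  intervalIntegral.continuous_parametric_intervalIntegral_of_continuous'
    continuous_integrand_uncurry _ _

theorem tendsto_eight_div_add_one : Tendsto (fun n : ℕ => 8 / ((n : ℝ) + 1)) atTop (𝓝 0) := by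
  simpa [div_eq_mul_inv] using tendsto_one_div_add_atTop_nhds_zero_nat.const_mul (8 : ℝ)

section Limit

variable (hk : 2 ≤ k) (hke : Even k)
include hk hke

theorem norm_truncIntegral_sub_le (hε : 0 ≤ ε) {n m : ℕ} (hnm : n ≤ m) :
    ‖truncIntegral k x m ε - truncIntegral k x n ε‖ ≤ 8 / (n + 1) := by
  have hint : ∀ a b, IntervalIntegrable (integrand k x ε) volume a b :=
    fun a b => continuous_integrand.intervalIntegrable a b
  have hRR' : |x| + n + 1 ≤ |x| + m + 1 := by gcongr
  have hfar : ∀ s, |x| + n + 1 ≤ |s| → (n : ℝ) + 1 ≤ |phaseDeriv k x s| := fun s hs => by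
    linarith [sub_abs_le_abs_phaseDeriv hk hke (x := x) (s := s) (by linarith [abs_nonneg x])]
  have hleft := norm_integral_integrand_le hk hke (neg_le_neg hRR') n.cast_add_one_pos
    (fun s hs => hfar s (by
      rw [abs_of_neg (by linarith [hs.2, abs_nonneg x] : s < 0)]
      linarith [hs.2])) hε
  have hright := norm_integral_integrand_le hk hke hRR' n.cast_add_one_pos
    (fun s hs => hfar s (by
      rw [abs_of_pos (by linarith [hs.1, abs_nonneg x] : 0 < s)]
      linarith [hs.1])) hε
  rw [truncIntegral, truncIntegral, intervalIntegral.integral_interval_sub_interval_comm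
    (hint _ _) (hint _ _) (hint _ _), intervalIntegral.integral_symm (|x| + n + 1)]
  calc _ ≤ _ := norm_sub_le _ _
    _ ≤ 4 / (n + 1) + 4 / (n + 1) := by rw [norm_neg]; gcongr
    _ = 8 / (n + 1) := by ring

theorem norm_integral_sub_truncIntegral_le (hε : 0 < ε) (n : ℕ) :
    ‖(∫ s, integrand k x ε s) - truncIntegral k x n ε‖ ≤ 8 / (n + 1) := by
  have hlim : Tendsto (fun m => truncIntegral k x m ε) atTop (𝓝 (∫ s, integrand k x ε s)) :=
    intervalIntegral_tendsto_integral (integrable_integrand hk hke hε)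
      (tendsto_neg_atTop_atBot.comp (tendsto_radius_atTop x)) (tendsto_radius_atTop x)
  exact le_of_tendsto (hlim.sub_const _).norm
    (eventually_atTop.2 ⟨n, fun m hm => norm_truncIntegral_sub_le hk hke hε.le hm⟩)

theorem tendstoUniformlyOnFilter_truncIntegral (x : ℝ) :
    TendstoUniformlyOnFilter (truncIntegral k x) (fun ε => ∫ s, integrand k x ε s) atTop
      (𝓝[>] 0) := by
  rw [Metric.tendstoUniformlyOnFilter_iff]
  intro δ hδ
  filter_upwards [(tendsto_eight_div_add_one.eventually (gt_mem_nhds hδ)).prod_inl _,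
    (eventually_mem_nhdsWithin (s := Ioi 0)).prod_inr _] with ⟨n, ε⟩ hn hε
  rw [dist_eq_norm]
  exact (norm_integral_sub_truncIntegral_le hk hke hε n).trans_lt hn

theorem cauchySeq_truncIntegral_zero (x : ℝ) : CauchySeq fun n => truncIntegral k x n 0 :=
  cauchySeq_of_le_tendsto_0' _ (fun _ _ hnm => by
    rw [dist_comm, dist_eq_norm]
    exact norm_truncIntegral_sub_le hk hke le_rfl hnm)
    tendsto_eight_div_add_one

theorem eventually_norm_truncIntegral_le_six (x : ℝ) :
    ∀ᶠ n in atTop, ‖truncIntegral k x n 0‖ ≤ 6 :=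
  (tendsto_radius_atTop x).eventually (eventually_norm_integral_integrand_le_six hk hke le_rfl)

end Limit

end OscillatoryIntegral

/-- For every even integer `k ≥ 2` and every real `x`, the improper oscillatory integral
`A_k(x) = lim_{ε→0+} ∫ exp(-ε s^k + i x s + i s^k) ds` exists and `|A_k(x)| ≤ 6`. -/
theorem stmt_0 (k : ℕ) (hk : 2 ≤ k) (hke : Even k) (x : ℝ) :
    ∃ A : ℂ,
      Tendsto
        (fun ε : ℝ =>
          ∫ s : ℝ, Complex.exp (-(↑(ε * s ^ k)) + ↑(x * s) * Complex.I + ↑(s ^ k) * Complex.I))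
        (nhdsWithin 0 (Set.Ioi 0)) (nhds A) ∧
      ‖A‖ ≤ 6 := by
  obtain ⟨A, hA⟩ :=
    cauchySeq_tendsto_of_complete (OscillatoryIntegral.cauchySeq_truncIntegral_zero hk hke x)
  have hcont : ∀ n, Tendsto (OscillatoryIntegral.truncIntegral k x n) (𝓝[>] 0)
      (𝓝 (OscillatoryIntegral.truncIntegral k x n 0)) := fun n =>
    (OscillatoryIntegral.continuous_truncIntegral n).continuousAt.continuousWithinAt
  exact ⟨A, (OscillatoryIntegral.tendstoUniformlyOnFilter_truncIntegral hk hke x)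
      |>.tendsto_of_eventually_tendsto (Eventually.of_forall hcont) hA,
    le_of_tendsto hA.norm (OscillatoryIntegral.eventually_norm_truncIntegral_le_six hk hke x)⟩
end

section
/- For every integer k ≥ 2 (even or odd) and every real x, the oscillatory integral A_k(x) = lim_{ε→0+} ∫_{-∞}^{∞} exp(-ε |s|^k + i x s + i s^k) ds exists and satisfies |A_k(x)| ≤ 12. -/
/-!
On `s > 0` the integrand is `exp(-ε sᵏ) e^{i(a s + sᵏ)}` with `a = x`; on `s < 0`, after
`s ↦ -s`, it is the same with `a = -x` for even `k` and the complex conjugate of the `a = x`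
term for odd `k`. For every `a` the frequency `a + k s^{k-1}` increases on `[0, ∞)` and has
modulus `≥ 2` outside an interval of length `2`, so van der Corput's lemma bounds the partial
integrals `∫₀^R e^{i(a s + sᵏ)} ds` by `3/2 + 2 + 3/2 = 5` and makes them Cauchy as `R → ∞`.
An Abelian argument (integration by parts against the Weibull density `-∂ₛ exp(-ε sᵏ)`,
rescaling, dominated convergence) shows that the regularised half-line integrals converge to
the same limit as `ε → 0⁺`. The two half-lines together give `|A_k(x)| ≤ 10`.
-/

open MeasureTheory Filter Set Complex Topology ComplexConjugate

section MonotoneFrequency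

variable {g : ℝ → ℝ} {α β lam s : ℝ}

lemma MonotoneOn.le_abs_of_mem_Icc (hg : MonotoneOn g (Icc α β))
    (hsign : lam ≤ g α ∨ g β ≤ -lam) (hs : s ∈ Icc α β) : lam ≤ |g s| := by
  have hα : α ∈ Icc α β := left_mem_Icc.2 (hs.1.trans hs.2)
  have hβ : β ∈ Icc α β := right_mem_Icc.2 (hs.1.trans hs.2)
  rcases hsign with h | h
  · exact h.trans ((hg hα hs hs.1).trans (le_abs_self _))
  · exact (le_neg.1 (h.trans' (hg hs hβ hs.2))).trans (neg_le_abs _)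

lemma MonotoneOn.inv_sub_inv_le (hg : MonotoneOn g (Icc α β)) (hαβ : α ≤ β) (hlam : 0 < lam)
    (hsign : lam ≤ g α ∨ g β ≤ -lam) : (g α)⁻¹ - (g β)⁻¹ ≤ lam⁻¹ := by
  have hgαβ := hg (left_mem_Icc.2 hαβ) (right_mem_Icc.2 hαβ) hαβ
  rcases hsign with h | h
  · have := inv_anti₀ hlam h
    have := inv_pos.2 (hlam.trans_le (h.trans hgαβ))
    linarith
  · have := inv_anti₀ hlam (le_neg.1 h)
    have := inv_lt_zero.2 (hgαβ.trans_lt (h.trans_lt (neg_neg_of_pos hlam)))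
    rw [inv_neg] at *
    linarith

end MonotoneFrequency

section VanDerCorput

variable {φ φ' φ'' : ℝ → ℝ} {α β lam : ℝ}

lemma hasDerivAt_cexp_mul_I (hφ : ∀ s, HasDerivAt φ (φ' s) s) (s : ℝ) :
    HasDerivAt (fun s => cexp (φ s * I)) (I * φ' s * cexp (φ s * I)) s := by
  convert ((hφ s).ofReal_comp.mul_const I).cexp using 1
  ring

lemma continuous_cexp_mul_I (hφ : ∀ s, HasDerivAt φ (φ' s) s) :
    Continuous fun s => cexp (φ s * I) :=
  continuous_iff_continuousAt.2 fun s => (hasDerivAt_cexp_mul_I hφ s).continuousAt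

lemma monotoneOn_of_hasDerivAt_nonneg {D : Set ℝ} (hD : Convex ℝ D)
    (hφ' : ∀ s, HasDerivAt φ' (φ'' s) s) (hφ''_nonneg : ∀ s ∈ D, 0 ≤ φ'' s) :
    MonotoneOn φ' D :=
  monotoneOn_of_hasDerivWithinAt_nonneg hD (fun s _ => (hφ' s).continuousAt.continuousWithinAt)
    (fun s _ => (hφ' s).hasDerivWithinAt) (fun s hs => hφ''_nonneg s (interior_subset hs))

lemma hasDerivAt_neg_inv_of_ne_zero (hφ' : ∀ s, HasDerivAt φ' (φ'' s) s) {s : ℝ}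
    (hs : φ' s ≠ 0) : HasDerivAt (fun s => -(φ' s)⁻¹) (φ'' s / φ' s ^ 2) s :=
  ((hφ' s).inv hs).neg.congr_deriv (by rw [neg_div, neg_neg])

lemma intervalIntegrable_div_sq (hφ' : ∀ s, HasDerivAt φ' (φ'' s) s) (hαβ : α ≤ β)
    (hne : ∀ s ∈ Icc α β, φ' s ≠ 0) (hφ''_nonneg : ∀ s ∈ Icc α β, 0 ≤ φ'' s) :
    IntervalIntegrable (fun s => φ'' s / φ' s ^ 2) volume α β := by
  rw [← uIcc_of_le hαβ] at hne
  refine intervalIntegral.intervalIntegrable_deriv_of_nonneg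
    (fun s hs => (hasDerivAt_neg_inv_of_ne_zero hφ' (hne s hs)).continuousAt.continuousWithinAt)
    (fun s hs => hasDerivAt_neg_inv_of_ne_zero hφ' (hne s (Ioo_subset_Icc_self hs)))
    (fun s hs => div_nonneg (hφ''_nonneg s ?_) (sq_nonneg _))
  rw [min_eq_left hαβ, max_eq_right hαβ] at hs
  exact Ioo_subset_Icc_self hs

/-- Integration by parts against `(I φ')⁻¹ = I * (-1/φ')`. -/
lemma integral_cexp_mul_I_eq (hφ : ∀ s, HasDerivAt φ (φ' s) s)
    (hφ' : ∀ s, HasDerivAt φ' (φ'' s) s) (hαβ : α ≤ β) (hne : ∀ s ∈ Icc α β, φ' s ≠ 0)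
    (hφ''_nonneg : ∀ s ∈ Icc α β, 0 ≤ φ'' s) :
    ∫ s in α..β, cexp (φ s * I) =
      I * ↑(-(φ' β)⁻¹) * cexp (φ β * I) - I * ↑(-(φ' α)⁻¹) * cexp (φ α * I)
        - ∫ s in α..β, I * ↑(φ'' s / φ' s ^ 2) * cexp (φ s * I) := by
  have hr_int := intervalIntegrable_div_sq hφ' hαβ hne hφ''_nonneg
  have hφ'_cont : Continuous φ' := continuous_iff_continuousAt.2 fun s => (hφ' s).continuousAt
  rw [← intervalIntegral.integral_mul_deriv_eq_deriv_mul
    (fun s hs => (hasDerivAt_neg_inv_of_ne_zero hφ'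
      (hne s (uIcc_of_le hαβ ▸ hs))).ofReal_comp.const_mul I)
    (fun s _ => hasDerivAt_cexp_mul_I hφ s)
    (IntervalIntegrable.const_mul ⟨hr_int.1.ofReal, hr_int.2.ofReal⟩ I)
    (((continuous_const.mul (continuous_ofReal.comp hφ'_cont)).mul
      (continuous_cexp_mul_I hφ)).intervalIntegrable _ _)]
  refine intervalIntegral.integral_congr fun s hs => ?_
  have : (φ' s : ℂ) ≠ 0 := ofReal_ne_zero.2 (hne s (uIcc_of_le hαβ ▸ hs))
  push_cast
  field_simp
  simp

/-- Van der Corput's lemma for the first derivative (with constant `3`). -/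
theorem norm_integral_cexp_mul_I_le (hφ : ∀ s, HasDerivAt φ (φ' s) s)
    (hφ' : ∀ s, HasDerivAt φ' (φ'' s) s) (hαβ : α ≤ β)
    (hφ''_nonneg : ∀ s ∈ Icc α β, 0 ≤ φ'' s) (hlam : 0 < lam)
    (hsign : lam ≤ φ' α ∨ φ' β ≤ -lam) :
    ‖∫ s in α..β, cexp (φ s * I)‖ ≤ 3 / lam := by
  have hmono := monotoneOn_of_hasDerivAt_nonneg (convex_Icc α β) hφ' hφ''_nonneg
  have hbound : ∀ s ∈ Icc α β, lam ≤ |φ' s| := fun s hs => hmono.le_abs_of_mem_Icc hsign hs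
  have hne : ∀ s ∈ Icc α β, φ' s ≠ 0 := fun s hs h => by
    have := hbound s hs; rw [h, abs_zero] at this; linarith
  have hboundary : ∀ s ∈ Icc α β, ‖I * ↑(-(φ' s)⁻¹) * cexp (φ s * I)‖ ≤ lam⁻¹ := fun s hs => by
    rw [norm_mul, norm_mul, norm_exp_ofReal_mul_I, norm_I, norm_real, Real.norm_eq_abs,
      abs_neg, abs_inv, one_mul, mul_one]
    exact inv_anti₀ hlam (hbound s hs)
  have hrest : ‖∫ s in α..β, I * ↑(φ'' s / φ' s ^ 2) * cexp (φ s * I)‖ ≤ lam⁻¹ := by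
    calc _ ≤ ∫ s in α..β, φ'' s / φ' s ^ 2 := by
          refine (intervalIntegral.norm_integral_le_integral_norm hαβ).trans_eq
            (intervalIntegral.integral_congr fun s hs => ?_)
          rw [uIcc_of_le hαβ] at hs
          simp only [norm_mul, norm_exp_ofReal_mul_I, norm_I, norm_real, Real.norm_eq_abs,
            one_mul, mul_one, abs_of_nonneg (div_nonneg (hφ''_nonneg s hs) (sq_nonneg _))]
      _ = (φ' α)⁻¹ - (φ' β)⁻¹ := by
          rw [intervalIntegral.integral_eq_sub_of_hasDerivAt
            (fun s hs => hasDerivAt_neg_inv_of_ne_zero hφ' (hne s (uIcc_of_le hαβ ▸ hs)))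
            (intervalIntegrable_div_sq hφ' hαβ hne hφ''_nonneg)]
          ring
      _ ≤ lam⁻¹ := hmono.inv_sub_inv_le hαβ hlam hsign
  rw [integral_cexp_mul_I_eq hφ hφ' hαβ hne hφ''_nonneg]
  calc _ ≤ ‖I * ↑(-(φ' β)⁻¹) * cexp (φ β * I)‖ + ‖I * ↑(-(φ' α)⁻¹) * cexp (φ α * I)‖
        + ‖∫ s in α..β, I * ↑(φ'' s / φ' s ^ 2) * cexp (φ s * I)‖ :=
          norm_sub_le_of_le (norm_sub_le _ _) le_rfl
    _ ≤ lam⁻¹ + lam⁻¹ + lam⁻¹ := by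
        gcongr
        exacts [hboundary β (right_mem_Icc.2 hαβ), hboundary α (left_mem_Icc.2 hαβ)]
    _ = 3 / lam := by ring

theorem exists_tendsto_integral_cexp_mul_I (hφ : ∀ s, HasDerivAt φ (φ' s) s)
    (hφ' : ∀ s, HasDerivAt φ' (φ'' s) s) (hφ''_nonneg : ∀ s ∈ Ici α, 0 ≤ φ'' s)
    (hφ'_tendsto : Tendsto φ' atTop atTop) :
    ∃ G, Tendsto (fun R => ∫ s in α..R, cexp (φ s * I)) atTop (𝓝 G) := by
  refine cauchySeq_tendsto_of_complete (Metric.cauchySeq_iff'.2 fun δ hδ => ?_)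
  obtain ⟨N, hN⟩ := ((hφ'_tendsto.eventually_ge_atTop (4 / δ)).and
    (eventually_ge_atTop α)).exists
  refine ⟨N, fun R hR => ?_⟩
  have hint := fun a b => (continuous_cexp_mul_I hφ).intervalIntegrable (μ := volume) a b
  rw [dist_eq_norm, intervalIntegral.integral_interval_sub_left (hint _ _) (hint _ _)]
  have hpos : 0 < φ' N := (div_pos four_pos hδ).trans_le hN.1
  calc _ ≤ 3 / φ' N := norm_integral_cexp_mul_I_le hφ hφ' hR
          (fun s hs => hφ''_nonneg s (hN.2.trans hs.1)) hpos (Or.inl le_rfl)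
    _ < 4 / (4 / δ) := by
        rw [div_lt_div_iff₀ hpos (by positivity)]
        nlinarith [hN.1]
    _ = δ := by field_simp

/-- Van der Corput on the pieces left of `b` and right of `c`, where `|φ'| ≥ lam`, and the
trivial bound on `[b, c]`. -/
theorem norm_integral_cexp_mul_I_le_of_Ici (hφ : ∀ s, HasDerivAt φ (φ' s) s)
    (hφ' : ∀ s, HasDerivAt φ' (φ'' s) s) (hφ''_nonneg : ∀ s ∈ Ici α, 0 ≤ φ'' s)
    (hlam : 0 < lam) {b c : ℝ} (hαb : α ≤ b) (hbc : b ≤ c) (hb : b = α ∨ φ' b ≤ -lam)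
    (hc : lam ≤ φ' c) {R : ℝ} (hR : α ≤ R) :
    ‖∫ s in α..R, cexp (φ s * I)‖ ≤ 6 / lam + (c - b) := by
  have hmono := monotoneOn_of_hasDerivAt_nonneg (convex_Ici α) hφ' hφ''_nonneg
  have hint := fun a b => (continuous_cexp_mul_I hφ).intervalIntegrable (μ := volume) a b
  have hvdc : ∀ β ∈ Icc α b, ‖∫ s in α..β, cexp (φ s * I)‖ ≤ 3 / lam := by
    intro β hβ
    rcases hb with rfl | hb
    · rw [le_antisymm hβ.2 hβ.1, intervalIntegral.integral_same, norm_zero]; positivity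
    · exact norm_integral_cexp_mul_I_le hφ hφ' hβ.1
        (fun s hs => hφ''_nonneg s hs.1) hlam (Or.inr ((hmono hβ.1 hαb hβ.2).trans hb))
  have hmid : ∀ β ∈ Icc b c, ‖∫ s in α..β, cexp (φ s * I)‖ ≤ 3 / lam + (c - b) := by
    intro β hβ
    rw [← intervalIntegral.integral_add_adjacent_intervals (hint α b) (hint b β)]
    refine (norm_add_le _ _).trans (add_le_add (hvdc b ⟨hαb, le_rfl⟩) ?_)
    refine (intervalIntegral.norm_integral_le_of_norm_le_const fun s _ =>
      (norm_exp_ofReal_mul_I (φ s)).le).trans ?_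
    rw [one_mul, abs_of_nonneg (sub_nonneg.2 hβ.1)]
    linarith [hβ.2]
  have h3 : 0 ≤ 3 / lam := by positivity
  have h6 : 6 / lam = 3 / lam + 3 / lam := by ring
  rcases le_total R b with hRb | hbR
  · exact (hvdc R ⟨hR, hRb⟩).trans (by linarith)
  rcases le_total R c with hRc | hcR
  · exact (hmid R ⟨hbR, hRc⟩).trans (by linarith)
  rw [← intervalIntegral.integral_add_adjacent_intervals (hint α c) (hint c R)]
  calc _ ≤ (3 / lam + (c - b)) + 3 / lam := (norm_add_le _ _).trans (add_le_add
          (hmid c ⟨hbc, le_rfl⟩) (norm_integral_cexp_mul_I_le hφ hφ' hcR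
            (fun s hs => hφ''_nonneg s ((hαb.trans hbc).trans hs.1)) hlam (Or.inl hc)))
    _ = 6 / lam + (c - b) := by rw [h6]; ring

end VanDerCorput

section Phase

variable (k : ℕ) (a : ℝ)

lemma hasDerivAt_mul_add_pow (s : ℝ) :
    HasDerivAt (fun s : ℝ => a * s + s ^ k) (a + k * s ^ (k - 1)) s :=
  (((hasDerivAt_id s).const_mul a).add (hasDerivAt_pow k s)).congr_deriv (by simp)

lemma hasDerivAt_add_mul_pow (s : ℝ) :
    HasDerivAt (fun s : ℝ => a + k * s ^ (k - 1)) (k * ((k - 1 : ℕ) * s ^ (k - 1 - 1))) s :=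
  ((hasDerivAt_pow (k - 1) s).const_mul (k : ℝ)).const_add a

/-- Take `b = max (t - 1) 0` and `c = t + 1`, where `t = (max (-a) 0 / k) ^ (1 / (k - 1))` is
the zero of the frequency `a + k s^(k-1)` on `[0, ∞)` when `a ≤ 0`. -/
lemma exists_add_mul_pow_le_neg_two_and_two_le (hk : 2 ≤ k) :
    ∃ b c : ℝ, 0 ≤ b ∧ b ≤ c ∧ c - b ≤ 2 ∧ (b = 0 ∨ a + k * b ^ (k - 1) ≤ -2) ∧
      2 ≤ a + k * c ^ (k - 1) := by
  set t := (max (-a) 0 / k) ^ (((k - 1 : ℕ) : ℝ))⁻¹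
  have ht0 : 0 ≤ t := by positivity
  have hk2 : (2 : ℝ) ≤ k := by exact_mod_cast hk
  have ht : k * t ^ (k - 1) = max (-a) 0 := by
    rw [Real.rpow_inv_natCast_pow (by positivity) (by omega)]
    field_simp
  have hpow : ∀ y : ℝ, 0 ≤ y → y ^ (k - 1) + 1 ≤ (y + 1) ^ (k - 1) := fun y hy => by
    simpa using pow_add_pow_le hy zero_le_one (by omega : k - 1 ≠ 0)
  refine ⟨max (t - 1) 0, t + 1, le_max_right _ _, max_le (by linarith) (by linarith),
    by linarith [le_max_left (t - 1) 0], ?_, ?_⟩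
  · rcases le_total t 1 with h | h
    · exact Or.inl (max_eq_right (by linarith))
    right
    have h1 := hpow (t - 1) (by linarith)
    rw [sub_add_cancel] at h1
    rw [max_eq_left (by linarith)]
    have : (1 : ℝ) ≤ t ^ (k - 1) := one_le_pow₀ h
    rcases le_total 0 (-a) with ha | ha
    · rw [max_eq_left ha] at ht; nlinarith
    · rw [max_eq_right ha] at ht; nlinarith
  · have h1 := hpow t ht0
    nlinarith [le_max_left (-a) 0]

theorem norm_integral_cexp_mul_add_pow_le (hk : 2 ≤ k) {R : ℝ} (hR : 0 ≤ R) :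
    ‖∫ s in (0 : ℝ)..R, cexp ((a * s + s ^ k : ℝ) * I)‖ ≤ 5 := by
  obtain ⟨b, c, hb0, hbc, hcb, hb, hc⟩ := exists_add_mul_pow_le_neg_two_and_two_le k a hk
  have := norm_integral_cexp_mul_I_le_of_Ici (hasDerivAt_mul_add_pow k a)
    (hasDerivAt_add_mul_pow k a) (fun s (hs : 0 ≤ s) => by positivity) two_pos hb0 hbc hb hc hR
  linarith

theorem exists_tendsto_integral_cexp_mul_add_pow (hk : 2 ≤ k) :
    ∃ G, Tendsto (fun R => ∫ s in (0 : ℝ)..R, cexp ((a * s + s ^ k : ℝ) * I)) atTop (𝓝 G) ∧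
      ‖G‖ ≤ 5 := by
  obtain ⟨G, hG⟩ := exists_tendsto_integral_cexp_mul_I (hasDerivAt_mul_add_pow k a)
    (hasDerivAt_add_mul_pow k a) (fun s (hs : 0 ≤ s) => by positivity)
    (tendsto_atTop_add_const_left _ a
      ((tendsto_pow_atTop (by omega : k - 1 ≠ 0)).const_mul_atTop (by positivity)))
  exact ⟨G, hG, le_of_tendsto hG.norm ((eventually_ge_atTop 0).mono fun R hR =>
    norm_integral_cexp_mul_add_pow_le k a hk hR)⟩

end Phase

section Abel

/-- The Weibull density `-∂ₛ exp(-ε sᵏ)` on `(0, ∞)`. -/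
noncomputable def abelWeight (k : ℕ) (ε s : ℝ) : ℝ := ε * k * s ^ (k - 1) * Real.exp (-(ε * s ^ k))

variable {k : ℕ} {ε : ℝ}

lemma hasDerivAt_exp_neg_mul_pow (k : ℕ) (ε s : ℝ) :
    HasDerivAt (fun s => Real.exp (-(ε * s ^ k))) (-abelWeight k ε s) s :=
  ((hasDerivAt_pow k s).const_mul ε).neg.exp.congr_deriv
    (by simp only [abelWeight, Pi.neg_apply]; ring)

lemma abelWeight_nonneg (hε : 0 ≤ ε) {s : ℝ} (hs : 0 ≤ s) : 0 ≤ abelWeight k ε s := by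
  unfold abelWeight; positivity

lemma mul_abelWeight_mul (hk : k ≠ 0) (σ t : ℝ) :
    σ * abelWeight k ε (σ * t) = abelWeight k (ε * σ ^ k) t := by
  obtain ⟨m, rfl⟩ := Nat.exists_eq_succ_of_ne_zero hk
  simp only [abelWeight, Nat.succ_sub_one, mul_pow, pow_succ]
  ring_nf

lemma tendsto_exp_neg_mul_pow_atTop (hk : k ≠ 0) (hε : 0 < ε) :
    Tendsto (fun s : ℝ => Real.exp (-(ε * s ^ k))) atTop (𝓝 0) :=
  Real.tendsto_exp_atBot.comp
    (tendsto_neg_atTop_atBot.comp ((tendsto_pow_atTop hk).const_mul_atTop hε))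

lemma integrableOn_exp_neg_mul_pow (hk : k ≠ 0) (hε : 0 < ε) :
    IntegrableOn (fun s : ℝ => Real.exp (-(ε * s ^ k))) (Ioi 0) := by
  refine (integrableOn_rpow_mul_exp_neg_mul_rpow (s := 0) neg_one_lt_zero
    (by positivity : (0 : ℝ) < k) hε).congr_fun (fun s (hs : 0 < s) => ?_) measurableSet_Ioi
  simp [Real.rpow_natCast]

lemma hasDerivAt_neg_exp_neg_mul_pow (s : ℝ) :
    HasDerivAt (fun s => -Real.exp (-(ε * s ^ k))) (abelWeight k ε s) s :=
  (hasDerivAt_exp_neg_mul_pow k ε s).neg.congr_deriv (neg_neg _)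

lemma continuous_abelWeight (k : ℕ) (ε : ℝ) : Continuous (abelWeight k ε) := by
  unfold abelWeight; fun_prop

lemma integrableOn_abelWeight (hk : k ≠ 0) (hε : 0 < ε) :
    IntegrableOn (abelWeight k ε) (Ioi 0) :=
  integrableOn_Ioi_deriv_of_nonneg' (fun s _ => hasDerivAt_neg_exp_neg_mul_pow s)
    (fun _ hs => abelWeight_nonneg hε.le (le_of_lt hs))
    (by simpa using (tendsto_exp_neg_mul_pow_atTop hk hε).neg)

lemma integral_abelWeight (hk : k ≠ 0) (hε : 0 < ε) :
    ∫ s in Ioi 0, abelWeight k ε s = 1 := by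
  rw [integral_Ioi_of_hasDerivAt_of_nonneg' (fun s _ => hasDerivAt_neg_exp_neg_mul_pow s)
    (fun _ hs => abelWeight_nonneg hε.le (le_of_lt hs))
    (by simpa using (tendsto_exp_neg_mul_pow_atTop hk hε).neg)]
  simp [zero_pow hk]

variable {f F : ℝ → ℂ} {M C : ℝ}

lemma integrableOn_exp_neg_mul_pow_mul (hk : k ≠ 0) (hε : 0 < ε) (hf : Continuous f)
    (hfM : ∀ s, ‖f s‖ ≤ M) :
    IntegrableOn (fun s => (Real.exp (-(ε * s ^ k)) : ℂ) * f s) (Ioi 0) :=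
  ((integrableOn_exp_neg_mul_pow hk hε).const_mul M).mono'
    ((continuous_ofReal.comp (by fun_prop)).mul hf).aestronglyMeasurable.restrict
    (ae_of_all _ fun s => by
      rw [norm_mul, norm_real, Real.norm_of_nonneg (Real.exp_pos _).le, mul_comm]
      exact mul_le_mul_of_nonneg_right (hfM s) (Real.exp_pos _).le)

lemma integrableOn_abelWeight_mul (hk : k ≠ 0) (hε : 0 < ε) (hF : Continuous F)
    (hFC : ∀ R, 0 ≤ R → ‖F R‖ ≤ C) :
    IntegrableOn (fun s => (abelWeight k ε s : ℂ) * F s) (Ioi 0) :=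
  ((integrableOn_abelWeight hk hε).const_mul C).mono'
    ((continuous_ofReal.comp (continuous_abelWeight k ε)).mul hF).aestronglyMeasurable.restrict
    ((ae_restrict_mem measurableSet_Ioi).mono fun s (hs : 0 < s) => by
      rw [norm_mul, norm_real, Real.norm_of_nonneg (abelWeight_nonneg hε.le hs.le), mul_comm]
      exact mul_le_mul_of_nonneg_right (hFC s hs.le) (abelWeight_nonneg hε.le hs.le))

/-- Integration by parts against the primitive of `f`; both boundary terms vanish. -/
lemma integral_exp_neg_mul_pow_smul_eq (hk : k ≠ 0) (hε : 0 < ε) (hf : Continuous f)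
    (hfM : ∀ s, ‖f s‖ ≤ M) (hFC : ∀ R, 0 ≤ R → ‖∫ s in (0 : ℝ)..R, f s‖ ≤ C) :
    ∫ s in Ioi 0, Real.exp (-(ε * s ^ k)) • f s
      = ∫ s in Ioi 0, abelWeight k ε s • ∫ t in (0 : ℝ)..s, f t := by
  set q : ℝ → ℂ := fun s => (Real.exp (-(ε * s ^ k)) : ℂ)
  set F : ℝ → ℂ := fun s => ∫ t in (0 : ℝ)..s, f t
  have hq : ∀ s, HasDerivAt q ((-abelWeight k ε s : ℝ) : ℂ) s := fun s =>
    (hasDerivAt_exp_neg_mul_pow k ε s).ofReal_comp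
  have hF : ∀ s, HasDerivAt F (f s) s := fun s => (hf.integral_hasStrictDerivAt 0 s).hasDerivAt
  have hF_cont : Continuous F := continuous_iff_continuousAt.2 fun s => (hF s).continuousAt
  have hqF : Continuous (q * F) :=
    (continuous_iff_continuousAt.2 fun s => (hq s).continuousAt).mul hF_cont
  have hqF_le : ∀ s, 0 ≤ s → ‖(q * F) s‖ ≤ C * Real.exp (-(ε * s ^ k)) := fun s hs => by
    rw [Pi.mul_apply, norm_mul, norm_real, Real.norm_of_nonneg (Real.exp_pos _).le, mul_comm]
    exact mul_le_mul_of_nonneg_right (hFC s hs) (Real.exp_pos _).le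
  have hibp := integral_Ioi_mul_deriv_eq_deriv_mul (a := 0) (a' := 0) (b' := 0)
    (fun s _ => hq s) (fun s _ => hF s) (integrableOn_exp_neg_mul_pow_mul hk hε hf hfM)
    (by simpa only [Pi.mul_def, Pi.neg_def, ofReal_neg, neg_mul] using
      (integrableOn_abelWeight_mul hk hε hF_cont hFC).neg)
    (by simpa [q, F] using (hqF.tendsto 0).mono_left nhdsWithin_le_nhds)
    (squeeze_zero_norm' ((eventually_ge_atTop 0).mono hqF_le)
      (by simpa using (tendsto_exp_neg_mul_pow_atTop hk hε).const_mul C))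
  simp only [Complex.real_smul]
  rw [hibp]
  simp only [ofReal_neg, neg_mul, integral_neg, sub_zero, zero_sub, neg_neg, F]

theorem tendsto_integral_exp_neg_mul_pow_smul (hk : k ≠ 0) {G : ℂ} (hf : Continuous f)
    (hfM : ∀ s, ‖f s‖ ≤ M) (hFC : ∀ R, 0 ≤ R → ‖∫ s in (0 : ℝ)..R, f s‖ ≤ C)
    (hFG : Tendsto (fun R => ∫ s in (0 : ℝ)..R, f s) atTop (𝓝 G)) :
    Tendsto (fun ε => ∫ s in Ioi 0, Real.exp (-(ε * s ^ k)) • f s) (𝓝[>] 0) (𝓝 G) := by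
  set F : ℝ → ℂ := fun R => ∫ s in (0 : ℝ)..R, f s
  -- the substitution `s = σ t` with `ε σ^k = 1` turns the weight into `abelWeight k 1`
  set σ : ℝ → ℝ := fun ε => ε⁻¹ ^ ((k : ℝ)⁻¹)
  have hrescale : ∀ ε > 0, ∫ s in Ioi 0, Real.exp (-(ε * s ^ k)) • f s
      = ∫ t in Ioi 0, abelWeight k 1 t • F (σ ε * t) := fun ε hε => by
    have hσ : 0 < σ ε := by positivity
    have hσk : ε * σ ε ^ k = 1 := by
      simp only [σ, Real.rpow_inv_natCast_pow (inv_nonneg.2 hε.le) hk, mul_inv_cancel₀ hε.ne']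
    have hsub := integral_comp_mul_left_Ioi (fun s => abelWeight k ε s • F s) 0 hσ
    rw [mul_zero] at hsub
    rw [integral_exp_neg_mul_pow_smul_eq hk hε hf hfM hFC, ← smul_inv_smul₀ hσ.ne'
      (∫ s in Ioi 0, abelWeight k ε s • F s), ← hsub, ← integral_smul]
    refine setIntegral_congr_fun measurableSet_Ioi fun t _ => ?_
    simp only [smul_smul, mul_abelWeight_mul hk, hσk, F]
  have hσ_tendsto : Tendsto σ (𝓝[>] 0) atTop :=
    (tendsto_rpow_atTop (by positivity)).comp tendsto_inv_nhdsGT_zero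
  have hF_cont : Continuous F := intervalIntegral.continuous_primitive
    (fun a b => hf.intervalIntegrable a b) 0
  have hlim := tendsto_integral_filter_of_dominated_convergence
    (fun t => C * abelWeight k 1 t)
    (F := fun ε t => abelWeight k 1 t • F (σ ε * t)) (l := 𝓝[>] 0) (μ := volume.restrict (Ioi 0))
    (Eventually.of_forall fun ε => ((continuous_abelWeight k 1).smul
      (hF_cont.comp (continuous_const.mul continuous_id))).aestronglyMeasurable)
    (eventually_nhdsWithin_of_forall fun ε (hε : 0 < ε) =>
      (ae_restrict_mem measurableSet_Ioi).mono fun t (ht : 0 < t) => by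
        rw [norm_smul, Real.norm_of_nonneg (abelWeight_nonneg zero_le_one ht.le), mul_comm]
        exact mul_le_mul_of_nonneg_right (hFC _ (by positivity))
          (abelWeight_nonneg zero_le_one ht.le))
    ((integrableOn_abelWeight hk one_pos).const_mul C)
    ((ae_restrict_mem measurableSet_Ioi).mono fun t (ht : 0 < t) =>
      (hFG.comp (hσ_tendsto.atTop_mul_const ht)).const_smul (abelWeight k 1 t))
  rw [integral_smul_const, integral_abelWeight hk one_pos, one_smul] at hlim
  exact hlim.congr' (eventually_nhdsWithin_of_forall fun ε hε => (hrescale ε hε).symm)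

end Abel

theorem exists_tendsto_integral_Ioi_exp_neg_mul_pow_smul_cexp (k : ℕ) (hk : 2 ≤ k) (a : ℝ) :
    ∃ G, Tendsto (fun ε => ∫ s in Ioi 0,
        Real.exp (-(ε * s ^ k)) • cexp ((a * s + s ^ k : ℝ) * I)) (𝓝[>] 0) (𝓝 G) ∧ ‖G‖ ≤ 5 := by
  obtain ⟨G, hG, hG5⟩ := exists_tendsto_integral_cexp_mul_add_pow k a hk
  exact ⟨G, tendsto_integral_exp_neg_mul_pow_smul (by omega)
    (continuous_cexp_mul_I (hasDerivAt_mul_add_pow k a)) (fun s => (norm_exp_ofReal_mul_I _).le)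
    (fun R hR => norm_integral_cexp_mul_add_pow_le k a hk hR) hG, hG5⟩

section WholeLine

variable {k : ℕ} {ε : ℝ}

lemma integral_eq_integral_Ioi_comp_neg_add {E : Type*} [NormedAddCommGroup E] [NormedSpace ℝ E]
    {f : ℝ → E} (hf : Integrable f) :
    ∫ x, f x = (∫ x in Ioi 0, f (-x)) + ∫ x in Ioi 0, f x := by
  rw [integral_comp_neg_Ioi, neg_zero,
    intervalIntegral.integral_Iic_add_Ioi hf.integrableOn hf.integrableOn]

lemma integrable_cexp_neg_mul_abs_pow (hk : 2 ≤ k) (hε : 0 < ε) (x : ℝ) :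
    Integrable fun s : ℝ =>
      cexp (-(↑(ε * |s| ^ k)) + ↑(x * s) * I + ↑(s ^ k) * I) := by
  refine ((integrable_exp_neg_mul_sq hε).const_mul (Real.exp ε)).mono'
    (by fun_prop) (ae_of_all _ fun s => ?_)
  -- `|s|^k ≥ s^2 - 1` gives Gaussian decay
  have hpow : s ^ 2 - 1 ≤ |s| ^ k := by
    rcases le_total |s| 1 with h | h
    · nlinarith [sq_abs s, abs_nonneg s, pow_nonneg (abs_nonneg s) k]
    · rw [← sq_abs]; linarith [pow_le_pow_right₀ h hk]
  rw [norm_exp, ← Real.exp_add]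
  simp only [add_re, neg_re, ofReal_re, mul_re, I_re, I_im, ofReal_im, mul_zero, zero_mul,
    sub_zero, add_zero]
  exact Real.exp_le_exp.2 (by nlinarith)

lemma cexp_neg_mul_abs_pow_eq_smul (x : ℝ) {s : ℝ} (hs : 0 ≤ s) :
    cexp (-(↑(ε * |s| ^ k)) + ↑(x * s) * I + ↑(s ^ k) * I)
      = Real.exp (-(ε * s ^ k)) • cexp ((x * s + s ^ k : ℝ) * I) := by
  rw [Complex.real_smul, ofReal_exp, ← Complex.exp_add, abs_of_nonneg hs]
  push_cast; ring_nf

lemma cexp_neg_mul_abs_pow_neg_eq_smul_of_even (hk : Even k) (x : ℝ) {s : ℝ} (hs : 0 ≤ s) :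
    cexp (-(↑(ε * |-s| ^ k)) + ↑(x * -s) * I + ↑((-s) ^ k) * I)
      = Real.exp (-(ε * s ^ k)) • cexp ((-x * s + s ^ k : ℝ) * I) := by
  rw [abs_neg, hk.neg_pow, mul_neg, ← neg_mul, cexp_neg_mul_abs_pow_eq_smul _ hs]

lemma cexp_neg_mul_abs_pow_neg_eq_conj_of_odd (hk : Odd k) (x : ℝ) {s : ℝ} (hs : 0 ≤ s) :
    cexp (-(↑(ε * |-s| ^ k)) + ↑(x * -s) * I + ↑((-s) ^ k) * I)
      = conj (Real.exp (-(ε * s ^ k)) • cexp ((x * s + s ^ k : ℝ) * I)) := by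
  rw [Complex.real_smul, map_mul, conj_ofReal, ← Complex.exp_conj, ofReal_exp, ← Complex.exp_add,
    abs_neg, abs_of_nonneg hs, hk.neg_pow]
  simp only [map_mul, conj_ofReal, conj_I]
  push_cast; ring_nf

end WholeLine

/-- For every integer `k ≥ 2` and every real `x`, the oscillatory integral
`A_k(x) = lim_{ε→0+} ∫ exp(-ε |s|^k + i x s + i s^k) ds` exists and `|A_k(x)| ≤ 12`. -/
theorem stmt_1 (k : ℕ) (hk : 2 ≤ k) (x : ℝ) :
    ∃ A : ℂ,
      Tendsto
        (fun ε : ℝ =>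
          ∫ s : ℝ, Complex.exp (-(↑(ε * |s| ^ k)) + ↑(x * s) * Complex.I + ↑(s ^ k) * Complex.I))
        (nhdsWithin 0 (Set.Ioi 0)) (nhds A) ∧
      ‖A‖ ≤ 12 := by
  obtain ⟨Gp, hGp, hGp5⟩ := exists_tendsto_integral_Ioi_exp_neg_mul_pow_smul_cexp k hk x
  have hsplit : ∀ ε > 0, ∫ s : ℝ, cexp (-(↑(ε * |s| ^ k)) + ↑(x * s) * I + ↑(s ^ k) * I)
      = (∫ s in Ioi 0, cexp (-(↑(ε * |-s| ^ k)) + ↑(x * -s) * I + ↑((-s) ^ k) * I))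
        + ∫ s in Ioi 0, Real.exp (-(ε * s ^ k)) • cexp ((x * s + s ^ k : ℝ) * I) := fun ε hε => by
    rw [integral_eq_integral_Ioi_comp_neg_add (integrable_cexp_neg_mul_abs_pow hk hε x)]
    exact congrArg _ (setIntegral_congr_fun measurableSet_Ioi fun s hs =>
      cexp_neg_mul_abs_pow_eq_smul x (le_of_lt hs))
  rcases Nat.even_or_odd k with hk_even | hk_odd
  · obtain ⟨Gm, hGm, hGm5⟩ := exists_tendsto_integral_Ioi_exp_neg_mul_pow_smul_cexp k hk (-x)
    refine ⟨Gm + Gp, (hGm.add hGp).congr' ?_, (norm_add_le _ _).trans (by linarith)⟩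
    filter_upwards [self_mem_nhdsWithin] with ε hε
    rw [hsplit ε hε, setIntegral_congr_fun measurableSet_Ioi fun s hs =>
      cexp_neg_mul_abs_pow_neg_eq_smul_of_even hk_even x (le_of_lt hs)]
  · refine ⟨conj Gp + Gp, (((continuous_conj.tendsto Gp).comp hGp).add hGp).congr' ?_,
      (norm_add_le _ _).trans (by rw [norm_conj]; linarith)⟩
    filter_upwards [self_mem_nhdsWithin] with ε hε
    rw [hsplit ε hε, setIntegral_congr_fun measurableSet_Ioi fun s hs =>
      cexp_neg_mul_abs_pow_neg_eq_conj_of_odd hk_odd x (le_of_lt hs), integral_conj]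
    rfl
end

section
/- Let n ≥ 2, a_1,…,a_{n-1} nonzero reals, k_1,…,k_{n-1} integers ≥ 2, R(ξ') = Σ_j a_j ξ_j^{k_j}, 1/q = Σ_j 1/k_j, and p ∈ [1,∞). Suppose there is a constant C_p > 0 such that (∫_{ℝ^{n-1}} |φ̂(ξ', R(ξ'))|² dξ')^{1/2} ≤ C_p ‖φ‖_{L^p(ℝⁿ)} for all Schwartz functions φ on ℝⁿ. Then p = 2 - 2/(2 + 1/q), i.e., 1 + 1/(2q) - (1 + 1/q)/p = 0. -/
/-!
Test the inequality on the anisotropic dilations `φ ∘ D_s`,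
`D_s = diag(s^{1/k_1}, …, s^{1/k_{n-1}}, s)`. Since `R(s^{1/k} ξ') = s R(ξ')`, `D_s` maps the
surface `ξ_n = R(ξ')` onto itself, and changes of variables give
`∫ |(φ ∘ D_s)^(ξ', R ξ')|² dξ' = s^{-(2 + 1/q)} ∫ |φ̂(ξ', R ξ')|² dξ'` and
`‖φ ∘ D_s‖_p^p = s^{-(1 + 1/q)} ‖φ‖_p^p`. For a fixed `φ` with `φ̂(0) ≠ 0` the restriction integral
is positive (the surface passes through `0`), and `s^β` is bounded on `(0, ∞)` only if `β = 0`,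
which forces `(1 + 1/q)/p = (2 + 1/q)/2`.
-/

open MeasureTheory Filter Set Real

/-- The Fourier transform `φ̂(ξ) = (2π)^{-n/2} ∫ φ(x) e^{-i x·ξ} dx`. -/
noncomputable def fourierTrans (n : ℕ) (φ : EuclideanSpace ℝ (Fin n) → ℂ)
    (ξ : EuclideanSpace ℝ (Fin n)) : ℂ :=
  ((2 * π) ^ (-(n : ℝ) / 2) : ℝ) *
    ∫ x : EuclideanSpace ℝ (Fin n), φ x * Complex.exp (-Complex.I * (↑(∑ j, x j * ξ j)))

open scoped FourierTransform RealInnerProductSpace SchwartzMap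

theorem integral_comp_linearEquiv {F G : Type*} [NormedAddCommGroup F] [NormedSpace ℝ F]
    [MeasurableSpace F] [BorelSpace F] [FiniteDimensional ℝ F] [NormedAddCommGroup G]
    [NormedSpace ℝ G] (μ : Measure F) [μ.IsAddHaarMeasure] (T : F ≃ₗ[ℝ] F) (f : F → G) :
    ∫ x, f (T x) ∂μ = |LinearMap.det (T : F →ₗ[ℝ] F)|⁻¹ • ∫ x, f x ∂μ := by
  have hmap : μ.map T = ENNReal.ofReal |(LinearMap.det (T : F →ₗ[ℝ] F))⁻¹| • μ :=
    Measure.map_linearMap_addHaar_eq_smul_addHaar μ T.isUnit_det'.ne_zero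
  have hT : MeasurableEmbedding T := T.toContinuousLinearEquiv.toHomeomorph.measurableEmbedding
  rw [← hT.integral_map, hmap, integral_smul_measure, ENNReal.toReal_ofReal (abs_nonneg _), abs_inv]

section DiagScaling

variable {ι : Type*}

noncomputable def Pi.diagScaling (c : ι → ℝ) (hc : ∀ i, c i ≠ 0) : (ι → ℝ) ≃ₗ[ℝ] (ι → ℝ) :=
  LinearEquiv.piCongrRight fun i => LinearEquiv.smulOfNeZero ℝ ℝ (c i) (hc i)

@[simp] theorem Pi.diagScaling_apply (c : ι → ℝ) (hc : ∀ i, c i ≠ 0) (x : ι → ℝ) (i : ι) :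
    Pi.diagScaling c hc x i = c i * x i := rfl

variable [Fintype ι]

theorem Pi.det_diagScaling (c : ι → ℝ) (hc : ∀ i, c i ≠ 0) :
    LinearMap.det (Pi.diagScaling c hc : (ι → ℝ) →ₗ[ℝ] (ι → ℝ)) = ∏ i, c i := by
  classical
  have : (Pi.diagScaling c hc : (ι → ℝ) →ₗ[ℝ] (ι → ℝ)) = Matrix.toLin' (Matrix.diagonal c) := by
    ext x i; simp [Matrix.mulVec_diagonal]
  rw [this, LinearMap.det_toLin', Matrix.det_diagonal]

theorem Pi.integral_comp_diagScaling {G : Type*} [NormedAddCommGroup G] [NormedSpace ℝ G]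
    (c : ι → ℝ) (hc : ∀ i, c i ≠ 0) (f : (ι → ℝ) → G) :
    ∫ x : ι → ℝ, f (fun i => c i * x i) = |∏ i, c i|⁻¹ • ∫ x, f x := by
  rw [← Pi.det_diagScaling c hc, ← integral_comp_linearEquiv]
  rfl

noncomputable def EuclideanSpace.diagScaling (c : ι → ℝ) (hc : ∀ i, c i ≠ 0) :
    EuclideanSpace ℝ ι ≃L[ℝ] EuclideanSpace ℝ ι :=
  (((WithLp.linearEquiv 2 ℝ (ι → ℝ)).trans (Pi.diagScaling c hc)).trans
    (WithLp.linearEquiv 2 ℝ (ι → ℝ)).symm).toContinuousLinearEquiv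

@[simp] theorem EuclideanSpace.diagScaling_apply (c : ι → ℝ) (hc : ∀ i, c i ≠ 0)
    (x : EuclideanSpace ℝ ι) (i : ι) :
    EuclideanSpace.diagScaling c hc x i = c i * x i := rfl

@[simp] theorem EuclideanSpace.diagScaling_symm_apply (c : ι → ℝ) (hc : ∀ i, c i ≠ 0)
    (x : EuclideanSpace ℝ ι) (i : ι) :
    (EuclideanSpace.diagScaling c hc).symm x i = (c i)⁻¹ * x i := rfl

theorem EuclideanSpace.integral_comp_diagScaling {G : Type*} [NormedAddCommGroup G]
    [NormedSpace ℝ G] (c : ι → ℝ) (hc : ∀ i, c i ≠ 0) (f : EuclideanSpace ℝ ι → G) :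
    ∫ x, f (EuclideanSpace.diagScaling c hc x) = |∏ i, c i|⁻¹ • ∫ x, f x := by
  have hdet : LinearMap.det ((EuclideanSpace.diagScaling c hc).toLinearEquiv :
      EuclideanSpace ℝ ι →ₗ[ℝ] EuclideanSpace ℝ ι) = ∏ i, c i := by
    rw [← Pi.det_diagScaling c hc, ← LinearMap.det_conj _ (WithLp.linearEquiv 2 ℝ (ι → ℝ)).symm]
    rfl
  rw [← hdet, ← integral_comp_linearEquiv]
  rfl

end DiagScaling

theorem fourierTrans_comp_diagScaling {n : ℕ} (c : Fin n → ℝ) (hc : ∀ i, c i ≠ 0)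
    (f : EuclideanSpace ℝ (Fin n) → ℂ) (ξ : EuclideanSpace ℝ (Fin n)) :
    fourierTrans n (f ∘ EuclideanSpace.diagScaling c hc) ξ =
      (|∏ i, c i|⁻¹ : ℝ) * fourierTrans n f ((EuclideanSpace.diagScaling c hc).symm ξ) := by
  have hpair : ∀ x, ∑ j, EuclideanSpace.diagScaling c hc x j *
      (EuclideanSpace.diagScaling c hc).symm ξ j = ∑ j, x j * ξ j := fun x =>
    Finset.sum_congr rfl fun j _ => by
      simp only [EuclideanSpace.diagScaling_apply, EuclideanSpace.diagScaling_symm_apply]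
      field_simp [hc j]
  have hcov := EuclideanSpace.integral_comp_diagScaling c hc fun y =>
    f y * Complex.exp (-Complex.I * ↑(∑ j, y j * (EuclideanSpace.diagScaling c hc).symm ξ j))
  simp only [hpair] at hcov
  simp only [fourierTrans, Function.comp_apply, hcov, Complex.real_smul]
  ring

-- The point `(ξ', R ξ')` of the graph of `R`; definitionally the point written out in `stmt_11`.
noncomputable def graphLift {m : ℕ} (R : (Fin m → ℝ) → ℝ) (ξ' : Fin m → ℝ) :
    EuclideanSpace ℝ (Fin (m + 1)) :=
  WithLp.toLp 2 (Fin.snoc ξ' (R ξ'))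

theorem diagScaling_snoc_graphLift {m : ℕ} {R : (Fin m → ℝ) → ℝ} {c : Fin m → ℝ} {l : ℝ}
    (hc : ∀ i, Fin.snoc (α := fun _ => ℝ) c l i ≠ 0)
    (hR : ∀ η, R (fun j => c j * η j) = l * R η) (η : Fin m → ℝ) :
    EuclideanSpace.diagScaling (Fin.snoc c l) hc (graphLift R η) =
      graphLift R (fun j => c j * η j) := by
  ext i
  induction i using Fin.lastCases with
  | last => simp [graphLift, hR]
  | cast j => simp [graphLift]

theorem integral_norm_sq_fourierTrans_graphLift_comp_diagScaling {m : ℕ}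
    {R : (Fin m → ℝ) → ℝ} {c : Fin m → ℝ} {l : ℝ} (hc : ∀ i, Fin.snoc (α := fun _ => ℝ) c l i ≠ 0)
    (hR : ∀ η, R (fun j => c j * η j) = l * R η) (f : EuclideanSpace ℝ (Fin (m + 1)) → ℂ) :
    ∫ ξ', ‖fourierTrans (m + 1) (f ∘ EuclideanSpace.diagScaling _ hc)
        (graphLift R ξ')‖ ^ 2 =
      (|∏ j, c j| * l ^ 2)⁻¹ * ∫ ξ', ‖fourierTrans (m + 1) f (graphLift R ξ')‖ ^ 2 := by
  have hc' : ∀ j, c j ≠ 0 := fun j => by simpa using hc j.castSucc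
  have hsub := Pi.integral_comp_diagScaling c hc' fun ξ' =>
    ‖fourierTrans (m + 1) f ((EuclideanSpace.diagScaling _ hc).symm (graphLift R ξ'))‖ ^ 2
  simp only [← diagScaling_snoc_graphLift hc hR, ContinuousLinearEquiv.symm_apply_apply,
    smul_eq_mul] at hsub
  calc _ = (|(∏ j, c j) * l|⁻¹) ^ 2 * ∫ ξ', ‖fourierTrans (m + 1) f
          ((EuclideanSpace.diagScaling _ hc).symm (graphLift R ξ'))‖ ^ 2 := by
        simp only [fourierTrans_comp_diagScaling, norm_mul, Complex.norm_real, norm_inv,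
          Real.norm_eq_abs, abs_abs, mul_pow, integral_const_mul, Fin.prod_snoc]
    _ = _ := by
        rw [hsub, abs_mul, ← sq_abs l]
        field_simp

theorem fourierTrans_eq_fourier {n : ℕ} (f : EuclideanSpace ℝ (Fin n) → ℂ)
    (ξ : EuclideanSpace ℝ (Fin n)) :
    fourierTrans n f ξ = ((2 * π) ^ (-(n : ℝ) / 2) : ℝ) * 𝓕 f ((2 * π)⁻¹ • ξ) := by
  rw [fourierTrans, Real.fourier_eq']
  congr 1
  refine integral_congr_ae (Eventually.of_forall fun x => ?_)
  have hinner : -2 * π * ⟪x, (2 * π)⁻¹ • ξ⟫ = -∑ j, x j * ξ j := by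
    simp only [PiLp.inner_apply, RCLike.inner_apply, conj_trivial, PiLp.smul_apply, smul_eq_mul,
      Finset.mul_sum]
    field_simp
    simp only [Finset.sum_neg_distrib, mul_comm]
  simp only [hinner, smul_eq_mul]
  rw [mul_comm]
  congr 2
  push_cast
  ring

theorem exists_schwartzMap_eq_fourierTrans {n : ℕ} (φ : 𝓢(EuclideanSpace ℝ (Fin n), ℂ)) :
    ∃ ψ : 𝓢(EuclideanSpace ℝ (Fin n), ℂ), fourierTrans n φ = ψ := by
  let e : EuclideanSpace ℝ (Fin n) ≃L[ℝ] EuclideanSpace ℝ (Fin n) :=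
    (LinearEquiv.smulOfNeZero ℝ _ (2 * π)⁻¹ (by positivity)).toContinuousLinearEquiv
  refine ⟨(((2 * π) ^ (-(n : ℝ) / 2) : ℝ) : ℂ) •
    SchwartzMap.compCLMOfContinuousLinearEquiv ℝ e (𝓕 φ), ?_⟩
  ext ξ
  rw [fourierTrans_eq_fourier]
  rfl

theorem fourierTrans_zero {n : ℕ} (f : EuclideanSpace ℝ (Fin n) → ℂ) :
    fourierTrans n f 0 = ((2 * π) ^ (-(n : ℝ) / 2) : ℝ) * ∫ x, f x := by
  simp [fourierTrans]

theorem exists_schwartzMap_integral_ne_zero (E : Type*) [NormedAddCommGroup E]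
    [NormedSpace ℝ E] [FiniteDimensional ℝ E] [MeasurableSpace E] [BorelSpace E]
    (μ : Measure E) [μ.IsAddHaarMeasure] :
    ∃ φ : 𝓢(E, ℂ), ∫ x, φ x ∂μ ≠ 0 := by
  let b : ContDiffBump (0 : E) := ⟨1, 2, one_pos, one_lt_two⟩
  let f : E → ℂ := fun x => (b x : ℂ)
  have hf : HasCompactSupport f := b.hasCompactSupport.comp_left Complex.ofReal_zero
  refine ⟨hf.toSchwartzMap (Complex.ofRealCLM.contDiff.comp b.contDiff), ?_⟩
  show ∫ x, ((b x : ℝ) : ℂ) ∂μ ≠ 0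
  rw [integral_complex_ofReal]
  exact Complex.ofReal_ne_zero.2 (b.integral_pos (μ := μ)).ne'

theorem SchwartzMap.integrable_norm_sq_comp {E F V : Type*} [NormedAddCommGroup E]
    [NormedSpace ℝ E] [NormedAddCommGroup V] [NormedSpace ℝ V] [NormedAddCommGroup F]
    [NormedSpace ℝ F] [FiniteDimensional ℝ F] [MeasurableSpace F] [BorelSpace F]
    (μ : Measure F) [μ.IsAddHaarMeasure] (f : 𝓢(E, V)) {g : F → E} (hg : Continuous g)
    (hgn : ∀ x, ‖x‖ ≤ ‖g x‖) : Integrable (fun x => ‖f (g x)‖ ^ 2) μ := by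
  set d := Module.finrank ℝ F + 1
  obtain ⟨M, hM⟩ : ∃ M, ∀ y, (1 + ‖y‖) ^ d * ‖f y‖ ≤ M :=
    ⟨_, fun y => by
      simpa using SchwartzMap.one_add_le_sup_seminorm_apply (𝕜 := ℝ) (m := (d, 0)) le_rfl le_rfl f y⟩
  have hd : (Module.finrank ℝ F : ℝ) < (2 * d : ℕ) := by exact_mod_cast (by omega)
  have hint : Integrable (fun x : F => M ^ 2 * (1 + ‖x‖) ^ (-((2 * d : ℕ) : ℝ))) μ :=
    (integrable_one_add_norm hd).const_mul _
  refine hint.mono' ((f.continuous.comp hg).norm.pow 2).aestronglyMeasurable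
    (Eventually.of_forall fun x => ?_)
  have hx : 0 < 1 + ‖x‖ := by positivity
  have hdecay : (1 + ‖x‖) ^ d * ‖f (g x)‖ ≤ M :=
    (mul_le_mul_of_nonneg_right (pow_le_pow_left₀ hx.le (by linarith [hgn x]) d)
      (norm_nonneg _)).trans (hM (g x))
  rw [norm_pow, norm_norm, rpow_neg hx.le, rpow_natCast, ← div_eq_mul_inv,
    le_div_iff₀ (by positivity)]
  calc ‖f (g x)‖ ^ 2 * (1 + ‖x‖) ^ (2 * d) = ((1 + ‖x‖) ^ d * ‖f (g x)‖) ^ 2 := by ring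
    _ ≤ M ^ 2 := pow_le_pow_left₀ (by positivity) hdecay 2

theorem continuous_graphLift {m : ℕ} {R : (Fin m → ℝ) → ℝ} (hR : Continuous R) :
    Continuous (graphLift R) :=
  (PiLp.continuous_toLp 2 _).comp (Continuous.finSnoc (A := fun _ => ℝ) continuous_id hR)

theorem norm_le_norm_graphLift {m : ℕ} (R : (Fin m → ℝ) → ℝ) (ξ' : Fin m → ℝ) :
    ‖ξ'‖ ≤ ‖graphLift R ξ'‖ :=
  (pi_norm_le_iff_of_nonneg (norm_nonneg _)).2 fun j => by
    simpa [graphLift] using PiLp.norm_apply_le (graphLift R ξ') j.castSucc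

theorem exists_schwartzMap_integral_norm_sq_fourierTrans_graphLift_pos {m : ℕ}
    {R : (Fin m → ℝ) → ℝ} (hRc : Continuous R) (hR0 : R 0 = 0) :
    ∃ φ : 𝓢(EuclideanSpace ℝ (Fin (m + 1)), ℂ),
      0 < ∫ ξ', ‖fourierTrans (m + 1) φ (graphLift R ξ')‖ ^ 2 := by
  obtain ⟨φ, hφ⟩ := exists_schwartzMap_integral_ne_zero (EuclideanSpace ℝ (Fin (m + 1))) volume
  obtain ⟨ψ, hψ⟩ := exists_schwartzMap_eq_fourierTrans φ
  have hgraph0 : graphLift R 0 = 0 := by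
    ext i
    induction i using Fin.lastCases <;> simp [graphLift, hR0]
  refine ⟨φ, integral_pos_of_integrable_nonneg_nonzero (x := 0) ?_ ?_ (fun _ => by positivity) ?_⟩
  · rw [hψ]
    exact (ψ.continuous.comp (continuous_graphLift hRc)).norm.pow 2
  · rw [hψ]
    exact ψ.integrable_norm_sq_comp volume (continuous_graphLift hRc) (norm_le_norm_graphLift R)
  · simp only [hgraph0, fourierTrans_zero]
    exact pow_ne_zero _ (norm_ne_zero_iff.2 (mul_ne_zero (by simp; positivity) hφ))

theorem eq_of_forall_mul_rpow_le {a b α β : ℝ} (ha : 0 < a)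
    (h : ∀ s : ℝ, 0 < s → a * s ^ α ≤ b * s ^ β) : α = β := by
  have hle : ∀ s : ℝ, 0 < s → s ^ (α - β) ≤ b / a := fun s hs => by
    rw [rpow_sub hs, div_le_div_iff₀ (rpow_pos_of_pos hs _) ha, mul_comm]
    exact h s hs
  have hK : 1 ≤ b / a := by simpa using hle 1 one_pos
  by_contra hne
  have := hle ((b / a + 1) ^ (α - β)⁻¹) (by positivity)
  rw [← rpow_mul (by positivity), inv_mul_cancel₀ (sub_ne_zero.2 hne), rpow_one] at this
  linarith

theorem restriction_estimate_exponent_eq {m : ℕ} {R : (Fin m → ℝ) → ℝ} {e : Fin m → ℝ}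
    (hRc : Continuous R) (hR : ∀ s : ℝ, 0 < s → ∀ η, R (fun j => s ^ e j * η j) = s * R η)
    {p C : ℝ} (hineq : ∀ φ : 𝓢(EuclideanSpace ℝ (Fin (m + 1)), ℂ),
      (∫ ξ', ‖fourierTrans (m + 1) φ (graphLift R ξ')‖ ^ 2) ^ ((1 : ℝ) / 2) ≤
        C * (∫ x, ‖φ x‖ ^ p) ^ ((1 : ℝ) / p)) :
    (∑ j, e j + 1) / p = (∑ j, e j + 2) / 2 := by
  have hR0 : R 0 = 0 := by
    have h := hR 2 two_pos 0
    simp only [Pi.zero_apply, mul_zero] at h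
    change R 0 = 2 * R 0 at h
    linarith
  obtain ⟨φ, hφ⟩ := exists_schwartzMap_integral_norm_sq_fourierTrans_graphLift_pos hRc hR0
  set Q := ∑ j, e j
  have hscale : ∀ s : ℝ, 0 < s →
      (∫ ξ', ‖fourierTrans (m + 1) φ (graphLift R ξ')‖ ^ 2) ^ ((1 : ℝ) / 2) * s ^ (-(Q + 2) / 2) ≤
        (C * (∫ x, ‖φ x‖ ^ p) ^ ((1 : ℝ) / p)) * s ^ (-(Q + 1) / p) := by
    intro s hs
    have hc : ∀ i, Fin.snoc (α := fun _ => ℝ) (fun j => s ^ e j) s i ≠ 0 := fun i => by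
      induction i using Fin.lastCases <;> simp [hs.ne', (rpow_pos_of_pos hs _).ne']
    have h := hineq (SchwartzMap.compCLMOfContinuousLinearEquiv ℝ
      (EuclideanSpace.diagScaling _ hc) φ)
    have hprod : |∏ j, s ^ e j| = s ^ Q := by
      rw [← rpow_sum_of_pos hs, abs_of_pos (rpow_pos_of_pos hs _)]
    simp only [SchwartzMap.compCLMOfContinuousLinearEquiv_apply] at h
    rw [integral_norm_sq_fourierTrans_graphLift_comp_diagScaling hc (hR s hs)] at h
    simp only [Function.comp_apply] at h
    rw [EuclideanSpace.integral_comp_diagScaling _ hc (fun y => ‖φ y‖ ^ p), Fin.prod_snoc, abs_mul,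
      hprod, abs_of_pos hs, smul_eq_mul, ← rpow_two, ← rpow_add hs, ← rpow_add_one hs.ne'] at h
    have hpow : ∀ a r X : ℝ, 0 ≤ X → ((s ^ a)⁻¹ * X) ^ r = X ^ r * s ^ (-a * r) :=
      fun a r X hX => by
        rw [mul_rpow (by positivity) hX, ← rpow_neg hs.le, ← rpow_mul hs.le, mul_comm]
    rw [hpow _ _ _ (integral_nonneg fun _ => by positivity),
      hpow _ _ _ (integral_nonneg fun _ => by positivity), ← mul_assoc] at h
    convert h using 3 <;> ring
  have hexp := eq_of_forall_mul_rpow_le (rpow_pos_of_pos hφ _) hscale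
  rw [neg_div, neg_div, neg_inj] at hexp
  exact hexp.symm

theorem stmt_11_general (n : ℕ) (hn : 2 ≤ n) (a : Fin (n - 1) → ℝ)
    (k : Fin (n - 1) → ℕ) (hk : ∀ j, 2 ≤ k j)
    (R : (Fin (n - 1) → ℝ) → ℝ) (hR : ∀ ξ', R ξ' = ∑ j, a j * (ξ' j) ^ (k j))
    (p : ℝ) (C : ℝ)
    (hineq : ∀ φ : SchwartzMap (EuclideanSpace ℝ (Fin n)) ℂ,
      (∫ ξ' : Fin (n - 1) → ℝ,
          ‖fourierTrans n (fun x => φ x)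
            (WithLp.toLp 2 (fun j : Fin n => if h : (j : ℕ) < n - 1 then ξ' ⟨j, h⟩ else R (fun l => ξ' l)))‖ ^ 2) ^
          ((1 : ℝ) / 2) ≤
        C * (∫ x : EuclideanSpace ℝ (Fin n), ‖φ x‖ ^ p) ^ ((1 : ℝ) / p)) :
    p = 2 - 2 / (2 + ∑ j, (1 : ℝ) / (k j : ℝ)) := by
  obtain ⟨m, rfl⟩ : ∃ m, n = m + 1 := ⟨n - 1, by omega⟩
  have hk0 : ∀ j, k j ≠ 0 := fun j => by have := hk j; omega
  have hRc : Continuous R := by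
    rw [show R = _ from funext hR]
    fun_prop
  have hhom : ∀ s : ℝ, 0 < s → ∀ η, R (fun j => s ^ (1 / (k j : ℝ)) * η j) = s * R η := by
    intro s hs η
    simp only [hR, Finset.mul_sum, mul_pow, one_div, rpow_inv_natCast_pow hs.le (hk0 _)]
    exact Finset.sum_congr rfl fun j _ => by ring
  have hexp := restriction_estimate_exponent_eq hRc hhom hineq
  have hQ : 0 ≤ ∑ j, 1 / (k j : ℝ) := Finset.sum_nonneg fun j _ => by positivity
  have hp0 : p ≠ 0 := by
    rintro rfl
    simp only [div_zero] at hexp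
    linarith
  field_simp at hexp ⊢
  linarith

/-- Necessity of the exponent: if the restriction inequality
`(∫ |φ̂(ξ',R(ξ'))|² dξ')^{1/2} ≤ C_p ‖φ‖_{L^p}` holds for all Schwartz `φ`, where
`R(ξ') = Σ a_j ξ_j^{k_j}` and `1/q = Σ 1/k_j`, then `p = 2 - 2/(2 + 1/q)`. -/
theorem stmt_11 (n : ℕ) (hn : 2 ≤ n) (a : Fin (n - 1) → ℝ) (ha : ∀ j, a j ≠ 0)
    (k : Fin (n - 1) → ℕ) (hk : ∀ j, 2 ≤ k j)
    (R : (Fin (n - 1) → ℝ) → ℝ) (hR : ∀ ξ', R ξ' = ∑ j, a j * (ξ' j) ^ (k j))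
    (p : ℝ) (hp : 1 ≤ p) (C : ℝ) (hC : 0 < C)
    (hineq : ∀ φ : SchwartzMap (EuclideanSpace ℝ (Fin n)) ℂ,
      (∫ ξ' : Fin (n - 1) → ℝ,
          ‖fourierTrans n (fun x => φ x)
            (WithLp.toLp 2 (fun j : Fin n => if h : (j : ℕ) < n - 1 then ξ' ⟨j, h⟩ else R (fun l => ξ' l)))‖ ^ 2) ^
          ((1 : ℝ) / 2) ≤
        C * (∫ x : EuclideanSpace ℝ (Fin n), ‖φ x‖ ^ p) ^ ((1 : ℝ) / p)) :
    p = 2 - 2 / (2 + ∑ j, (1 : ℝ) / (k j : ℝ)) :=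
  stmt_11_general n hn a k hk R hR p C hineq
end
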